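/- Let Σ_P = diag(σ₁I₂, …, σₙI₂) with σⱼ > 0 and Q symmetric satisfying Jₙ Σ_P⁻¹ Q Σ_P Jₙ = -Q. Then for any j ≠ k with σⱼ ≠ σₖ, the 2×2 block of Q in rows {2j-1, 2j} and columns {2k-1, 2k} is the zero matrix. -/

import Mathlib

open Matrix Kronecker Polynomial

/-!
Conjugation by `Σ_P` scales the `(j, k)` block `B` of `Q` by `σₖ / σⱼ`, and `Jₙ` acts blockwise, so
the hypothesis says `J (c • B) J = -B` with `J = [[0,1],[-1,0]]` and `c = σₖ / σⱼ`. Conjugating this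
once more by `J` and using `J² = -1` gives `c² • B = B`; as `c > 0` and `c ≠ 1`, `B = 0`.
-/

/-- The 2×2 symplectic form matrix [[0,1],[-1,0]]. -/
noncomputable def Jb : Matrix (Fin 2) (Fin 2) ℝ := !![0, 1; -1, 0]

/-- Jₙ = Iₙ ⊗ J₁, indexed by pairs (block index, position within block). -/
noncomputable def Jmat (n : ℕ) : Matrix (Fin n × Fin 2) (Fin n × Fin 2) ℝ :=
  (1 : Matrix (Fin n) (Fin n) ℝ) ⊗ₖ Jb

/-- Block-scalar diagonal matrix diag(σ₁I₂, …, σₙI₂). -/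
noncomputable def SigmaD {n : ℕ} (σ : Fin n → ℝ) : Matrix (Fin n × Fin 2) (Fin n × Fin 2) ℝ :=
  Matrix.of fun p q => if p = q then σ p.1 else 0

theorem Jb_mul_Jb : Jb * Jb = -1 := by
  ext a b; fin_cases a <;> fin_cases b <;> simp [Jb]

theorem eq_zero_of_mul_smul_mul_eq_neg {K A : Type*} [Field K] [Ring A] [Algebra K A] {J B : A}
    (hJ : J * J = -1) {c : K} (hc : c ^ 2 ≠ 1) (h : J * (c • B) * J = -B) : B = 0 := by
  have hcB : c • B = -(J * B * J) := calc
    c • B = J * J * (c • B) * (J * J) := by simp [hJ]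
    _ = J * (J * (c • B) * J) * J := by simp only [mul_assoc]
    _ = -(J * B * J) := by rw [h]; noncomm_ring
  have hB : c ^ 2 • B = B := calc
    c ^ 2 • B = -(c • (J * B * J)) := by rw [sq, ← smul_smul, hcB, smul_neg]
    _ = B := by rw [← smul_mul_assoc, ← mul_smul_comm, h, neg_neg]
  have hB' : (c ^ 2 - 1) • B = 0 := by rw [sub_smul, hB, one_smul, sub_self]
  exact (smul_eq_zero.mp hB').resolve_left (sub_ne_zero.mpr hc)

theorem submatrix_one_kronecker_mul_mul_one_kronecker {R ι m : Type*} [CommRing R]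
    [Fintype ι] [DecidableEq ι] [Fintype m] (A B : Matrix m m R) (M : Matrix (ι × m) (ι × m) R)
    (j k : ι) :
    ((1 : Matrix ι ι R) ⊗ₖ A * M * (1 : Matrix ι ι R) ⊗ₖ B).submatrix (j, ·) (k, ·) =
      A * M.submatrix (j, ·) (k, ·) * B := by
  ext a b
  simp [Matrix.mul_apply, Fintype.sum_prod_type, Matrix.one_apply, Finset.sum_mul]

section
variable {n : ℕ}

theorem SigmaD_eq_diagonal (σ : Fin n → ℝ) : SigmaD σ = diagonal fun p => σ p.1 := by
  ext p q
  simp [SigmaD, diagonal_apply]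

theorem SigmaD_mul_SigmaD (σ τ : Fin n → ℝ) : SigmaD σ * SigmaD τ = SigmaD (σ * τ) := by
  simp only [SigmaD_eq_diagonal, diagonal_mul_diagonal, Pi.mul_apply]

theorem SigmaD_one : SigmaD (1 : Fin n → ℝ) = 1 := by
  simp only [SigmaD_eq_diagonal, Pi.one_apply, diagonal_one]

theorem inv_SigmaD {σ : Fin n → ℝ} (hσ : ∀ j, σ j ≠ 0) : (SigmaD σ)⁻¹ = SigmaD σ⁻¹ := by
  refine inv_eq_left_inv ?_
  rw [SigmaD_mul_SigmaD, show σ⁻¹ * σ = 1 from funext fun j => inv_mul_cancel₀ (hσ j), SigmaD_one]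

theorem submatrix_SigmaD_mul_mul_SigmaD (σ τ : Fin n → ℝ)
    (M : Matrix (Fin n × Fin 2) (Fin n × Fin 2) ℝ) (j k : Fin n) :
    (SigmaD σ * M * SigmaD τ).submatrix (j, ·) (k, ·) =
      (σ j * τ k) • M.submatrix (j, ·) (k, ·) := by
  ext a b
  simp only [SigmaD_eq_diagonal, diagonal_mul, mul_diagonal, submatrix_apply, Matrix.smul_apply,
    smul_eq_mul]
  ring
end

theorem stmt15_general (n : ℕ) (σ : Fin n → ℝ) (hσ : ∀ j, 0 < σ j)
    (Q : Matrix (Fin n × Fin 2) (Fin n × Fin 2) ℝ)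
    (hEq : Jmat n * (SigmaD σ)⁻¹ * Q * SigmaD σ * Jmat n = -Q) :
    ∀ j k : Fin n, j ≠ k → σ j ≠ σ k → ∀ a b : Fin 2, Q (j, a) (k, b) = 0 := by
  intro j k _ hσjk a b
  have hblock : Jb * (((σ j)⁻¹ * σ k) • Q.submatrix (j, ·) (k, ·)) * Jb =
      -Q.submatrix (j, ·) (k, ·) := by
    have hassoc : Jmat n * (SigmaD σ)⁻¹ * Q * SigmaD σ * Jmat n =
        Jmat n * (SigmaD σ⁻¹ * Q * SigmaD σ) * Jmat n := by
      simp only [inv_SigmaD fun i => (hσ i).ne', mul_assoc]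
    have hsub := congrArg (·.submatrix (j, ·) (k, ·)) (hassoc.symm.trans hEq)
    rwa [Jmat, submatrix_one_kronecker_mul_mul_one_kronecker, submatrix_SigmaD_mul_mul_SigmaD,
      Pi.inv_apply] at hsub
  have hc : ((σ j)⁻¹ * σ k) ^ 2 ≠ 1 := by
    have hc₀ : 0 ≤ (σ j)⁻¹ * σ k := mul_nonneg (inv_nonneg.2 (hσ j).le) (hσ k).le
    rw [ne_eq, pow_eq_one_iff_of_nonneg hc₀ two_ne_zero, inv_mul_eq_one₀ (hσ j).ne']
    exact hσjk
  have hB := eq_zero_of_mul_smul_mul_eq_neg Jb_mul_Jb hc hblock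
  simpa using congrFun (congrFun hB a) b

theorem stmt15 (n : ℕ) (σ : Fin n → ℝ) (hσ : ∀ j, 0 < σ j)
    (Q : Matrix (Fin n × Fin 2) (Fin n × Fin 2) ℝ) (hQsymm : Q.IsSymm)
    (hEq : Jmat n * (SigmaD σ)⁻¹ * Q * SigmaD σ * Jmat n = -Q) :
    ∀ j k : Fin n, j ≠ k → σ j ≠ σ k → ∀ a b : Fin 2, Q (j, a) (k, b) = 0 :=
  stmt15_general n σ hσ Q hEq
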